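/- arXiv:2501.12519 — 3 statements merged into one kernel-verified Lean document; each statement's English description precedes it below -/
import Mathlib

section
/- Summation theorem for flux: under the setup of the previous theorem, if additionally J satisfies ∑_{j=1}^n e_j ∂J/∂e_j = J (Euler-type identity in e, with S fixed) at (e, S(e)), then the composed flux Ĵ(e) = J(e, S(e)) satisfies ∑_{j=1}^n e_j ∂Ĵ/∂e_j = Ĵ(e). -/
/-!
Differentiating `F(e, S(e)) = 0` along the Euler direction `e` gives
`∂F/∂S · (DS(e) e) = -(∂F/∂e) e = 0`, so invertibility of `∂F/∂S` forces `DS(e) e = 0`: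
the Euler derivative of `S` vanishes. By the chain rule the Euler derivative of
`Ĵ(e) = J(e, S(e))` is then that of `J` with `S` frozen, which is `J` by hypothesis.
Throughout, `∑ⱼ eⱼ ∂f/∂eⱼ` is read as the directional derivative `Df(e) e`.
-/

open ContinuousLinearMap

theorem sum_mul_map_single {ι R F : Type*} [Fintype ι] [DecidableEq ι] [CommSemiring R]
    [FunLike F (ι → R) R] [LinearMapClass F R (ι → R) R] (L : F) (v : ι → R) :
    ∑ j, v j * L (Pi.single j 1) = L v := by
  conv_rhs => rw [← Finset.univ_sum_single v, map_sum]
  refine Finset.sum_congr rfl fun j _ => ?_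
  rw [← smul_eq_mul, ← map_smul, ← Pi.single_smul', smul_eq_mul, mul_one]

section ChainRule

variable {𝕜 E F G : Type*} [NontriviallyNormedField 𝕜]
  [NormedAddCommGroup E] [NormedSpace 𝕜 E] [NormedAddCommGroup F] [NormedSpace 𝕜 F]
  [NormedAddCommGroup G] [NormedSpace 𝕜 G]
  {Φ : E → F → G} {g : E → F} {x : E}

theorem fderiv_comp_graph_apply
    (hΦ : DifferentiableAt 𝕜 (fun p : E × F => Φ p.1 p.2) (x, g x))
    (hg : DifferentiableAt 𝕜 g x) (v : E) :
    fderiv 𝕜 (fun x' => Φ x' (g x')) x v =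
      fderiv 𝕜 (fun x' => Φ x' (g x)) x v + fderiv 𝕜 (Φ x) (g x) (fderiv 𝕜 g x v) := by
  set D := fderiv 𝕜 (fun p : E × F => Φ p.1 p.2) (x, g x)
  have hD := hΦ.hasFDerivAt
  have h_total : HasFDerivAt (fun x' => Φ x' (g x'))
      (D.comp ((ContinuousLinearMap.id 𝕜 E).prod (fderiv 𝕜 g x))) x :=
    (hD.comp x ((hasFDerivAt_id x).prodMk hg.hasFDerivAt) :)
  have h_fst : HasFDerivAt (fun x' => Φ x' (g x))
      (D.comp ((ContinuousLinearMap.id 𝕜 E).prod 0)) x :=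
    (hD.comp x ((hasFDerivAt_id x).prodMk (hasFDerivAt_const (𝕜 := 𝕜) (g x) x)) :)
  have h_snd : HasFDerivAt (Φ x)
      (D.comp ((0 : F →L[𝕜] E).prod (ContinuousLinearMap.id 𝕜 F))) (g x) :=
    (hD.comp (g x) ((hasFDerivAt_const (𝕜 := 𝕜) x (g x)).prodMk (hasFDerivAt_id (g x))) :)
  rw [h_total.fderiv, h_fst.fderiv, h_snd.fderiv]
  simp only [coe_comp, Function.comp_apply, prod_apply, coe_id', id_eq, zero_apply]
  rw [← map_add, Prod.mk_add_mk, add_zero, zero_add]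

theorem fderiv_apply_eq_zero_of_implicit {v : E}
    (hΦ : DifferentiableAt 𝕜 (fun p : E × F => Φ p.1 p.2) (x, g x))
    (hg : DifferentiableAt 𝕜 g x) (hΦg : ∀ x', Φ x' (g x') = 0)
    (hinj : Function.Injective (fderiv 𝕜 (Φ x) (g x)))
    (hv : fderiv 𝕜 (fun x' => Φ x' (g x)) x v = 0) :
    fderiv 𝕜 g x v = 0 := by
  have h_const : fderiv 𝕜 (fun x' => Φ x' (g x')) x v = 0 := by
    simp only [hΦg, fderiv_const_apply, zero_apply]
  rw [fderiv_comp_graph_apply hΦ hg, hv, zero_add] at h_const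
  exact (map_eq_zero_iff _ hinj).1 h_const

end ChainRule

theorem injective_fderiv_of_isUnit_jacobian {𝕜 ι : Type*} [NontriviallyNormedField 𝕜]
    [Fintype ι] [DecidableEq ι] {f : (ι → 𝕜) → ι → 𝕜} {y : ι → 𝕜}
    (hf : DifferentiableAt 𝕜 f y)
    (h : IsUnit (Matrix.of fun i j : ι => fderiv 𝕜 (fun s => f s i) y (Pi.single j 1))) :
    Function.Injective (fderiv 𝕜 f y) := by
  have h_jacobian : (Matrix.of fun i j : ι => fderiv 𝕜 (fun s => f s i) y (Pi.single j 1)) =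
      LinearMap.toMatrix' (fderiv 𝕜 f y : (ι → 𝕜) →ₗ[𝕜] ι → 𝕜) := by
    ext i j
    simp [fderiv_apply hf, LinearMap.toMatrix'_apply]
  intro a b hab
  apply Matrix.mulVec_injective_iff_isUnit.2 (h_jacobian ▸ h)
  simpa only [LinearMap.toMatrix'_mulVec, coe_coe] using hab

/-- Summation theorem for flux: if additionally `∑ⱼ eⱼ ∂J/∂eⱼ = J` (with `S` fixed),
then the composed flux `Ĵ(e) = J(e, S(e))` satisfies `∑ⱼ eⱼ ∂Ĵ/∂eⱼ = Ĵ(e)`. -/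
theorem summation_theorem_flux {n m : ℕ}
    (F : (Fin n → ℝ) → (Fin m → ℝ) → (Fin m → ℝ))
    (J : (Fin n → ℝ) → (Fin m → ℝ) → ℝ)
    (hF : ContDiff ℝ 1 (fun p : (Fin n → ℝ) × (Fin m → ℝ) => F p.1 p.2))
    (hJ : ContDiff ℝ 1 (fun p : (Fin n → ℝ) × (Fin m → ℝ) => J p.1 p.2))
    (S : (Fin n → ℝ) → (Fin m → ℝ))
    (hS : Differentiable ℝ S)
    (hFS : ∀ e, F e (S e) = 0)
    (hinv : ∀ e, IsUnit (Matrix.of fun i j : Fin m =>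
      fderiv ℝ (fun s => F e s i) (S e) (Pi.single j 1)))
    (hhomF : ∀ e (i : Fin m),
      ∑ j : Fin n, e j * fderiv ℝ (fun e' => F e' (S e) i) e (Pi.single j 1) = 0)
    (hhomJ : ∀ e,
      ∑ j : Fin n, e j * fderiv ℝ (fun e' => J e' (S e)) e (Pi.single j 1)
        = J e (S e)) :
    ∀ e, ∑ j : Fin n, e j * fderiv ℝ (fun e' => J e' (S e')) e (Pi.single j 1)
      = J e (S e) := by
  intro e
  have hFd := hF.differentiable one_ne_zero (e, S e)
  have hJd := hJ.differentiable one_ne_zero (e, S e)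
  have hF_e : DifferentiableAt ℝ (fun e' => F e' (S e)) e :=
    (hFd.comp e (differentiableAt_fun_id.prodMk (differentiableAt_const (𝕜 := ℝ) (S e))) :)
  have hF_s : DifferentiableAt ℝ (F e) (S e) :=
    (hFd.comp (S e) ((differentiableAt_const (𝕜 := ℝ) e).prodMk differentiableAt_fun_id) :)
  have euler_F : fderiv ℝ (fun e' => F e' (S e)) e e = 0 := by
    funext i
    have h := sum_mul_map_single (fderiv ℝ (fun e' => F e' (S e) i) e) e
    rw [hhomF e i, fderiv_apply hF_e i] at h
    simpa using h.symm
  have euler_S : fderiv ℝ S e e = 0 := fderiv_apply_eq_zero_of_implicit hFd (hS e) hFS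
    (injective_fderiv_of_isUnit_jacobian hF_s (hinv e)) euler_F
  calc ∑ j, e j * fderiv ℝ (fun e' => J e' (S e')) e (Pi.single j 1)
      = fderiv ℝ (fun e' => J e' (S e')) e e := sum_mul_map_single _ e
    _ = fderiv ℝ (fun e' => J e' (S e)) e e := by
      rw [fderiv_comp_graph_apply hJd (hS e), euler_S, map_zero, add_zero]
    _ = J e (S e) := by rw [← sum_mul_map_single, hhomJ e]
end

section
/- Concentration connectivity theorem (matrix form): suppose F(v(e, S)) = 0 defines S = S(e) implicitly, where the m×m matrix (∂F/∂v)(∂v/∂S) and the n×n matrix ∂v/∂e are invertible. Then (∂S/∂e)(∂v/∂e)⁻¹(∂v/∂S) = −I_m, where all Jacobians are evaluated at (e, S(e)) with S treated as independent in ∂v/∂e and ∂v/∂S. -/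
open Matrix

/-! Differentiating `F (v e (S e)) = 0` by the chain rule gives
`∂F/∂v · (∂v/∂e + ∂v/∂S · ∂S/∂e) = 0`, i.e. `(∂F/∂v)(∂v/∂S)(∂S/∂e) = -(∂F/∂v)(∂v/∂e)`.
Multiplying on the right by `(∂v/∂e)⁻¹(∂v/∂S)` turns the right-hand side into
`-(∂F/∂v)(∂v/∂S)`, and cancelling the invertible factor `(∂F/∂v)(∂v/∂S)` on the left
leaves `(∂S/∂e)(∂v/∂e)⁻¹(∂v/∂S) = -1`. -/

namespace Matrix

variable {R ι κ : Type*} [CommRing R] [Fintype ι] [DecidableEq ι] [Fintype κ] [DecidableEq κ]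

theorem mul_nonsing_inv_mul_eq_neg_one_of_mul_add_mul_mul_eq_zero
    {A : Matrix ι κ R} {B : Matrix κ ι R} {C : Matrix ι κ R} {D : Matrix κ κ R}
    (hAB : IsUnit (A * B)) (hD : IsUnit D) (h : A * D + A * B * C = 0) :
    C * D⁻¹ * B = -1 := by
  have hABC : A * B * C = -(A * D) := eq_neg_of_add_eq_zero_right h
  have hDD : D * D⁻¹ = 1 := mul_nonsing_inv D ((isUnit_iff_isUnit_det D).mp hD)
  refine hAB.mul_left_cancel ?_
  calc A * B * (C * D⁻¹ * B) = A * B * C * D⁻¹ * B := by simp only [Matrix.mul_assoc]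
    _ = -(A * (D * D⁻¹) * B) := by rw [hABC]; simp only [Matrix.neg_mul, Matrix.mul_assoc]
    _ = A * B * -1 := by rw [hDD, Matrix.mul_one, Matrix.mul_neg, Matrix.mul_one]

end Matrix

section Calculus

variable {𝕜 E G H K : Type*} [NontriviallyNormedField 𝕜]
  [NormedAddCommGroup E] [NormedSpace 𝕜 E] [NormedAddCommGroup G] [NormedSpace 𝕜 G]
  [NormedAddCommGroup H] [NormedSpace 𝕜 H] [NormedAddCommGroup K] [NormedSpace 𝕜 K]

theorem fderiv_comp_prodMk_left {f : E × G → H} {x : E} {y : G}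
    (hf : DifferentiableAt 𝕜 f (x, y)) :
    fderiv 𝕜 (fun x' => f (x', y)) x = fderiv 𝕜 f (x, y) ∘L .inl 𝕜 E G :=
  (hf.hasFDerivAt.comp x (hasFDerivAt_prodMk_left x y)).fderiv

theorem fderiv_comp_prodMk_right {f : E × G → H} {x : E} {y : G}
    (hf : DifferentiableAt 𝕜 f (x, y)) :
    fderiv 𝕜 (fun y' => f (x, y')) y = fderiv 𝕜 f (x, y) ∘L .inr 𝕜 E G :=
  (hf.hasFDerivAt.comp y (hasFDerivAt_prodMk_right x y)).fderiv

theorem DifferentiableAt.hasFDerivAt_comp_graph {f : E × G → H} {g : E → G} {g' : E →L[𝕜] G}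
    {x : E}
    (hf : DifferentiableAt 𝕜 f (x, g x)) (hg : HasFDerivAt g g' x) :
    HasFDerivAt (fun x' => f (x', g x'))
      (fderiv 𝕜 (fun x' => f (x', g x)) x + fderiv 𝕜 (fun y => f (x, y)) (g x) ∘L g') x := by
  refine (hf.hasFDerivAt.comp x ((hasFDerivAt_id x).prodMk hg)).congr_fderiv ?_
  rw [fderiv_comp_prodMk_left hf, fderiv_comp_prodMk_right hf]
  ext u
  simp [← map_add]

theorem fderiv_comp_add_fderiv_comp_eq_zero_of_comp_graph_eq_zero
    {F : H → K} {f : E × G → H} {g : E → G} {x : E}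
    (hF : DifferentiableAt 𝕜 F (f (x, g x))) (hf : DifferentiableAt 𝕜 f (x, g x))
    (hg : DifferentiableAt 𝕜 g x) (hFfg : ∀ x', F (f (x', g x')) = 0) :
    fderiv 𝕜 F (f (x, g x)) ∘L
      (fderiv 𝕜 (fun x' => f (x', g x)) x + fderiv 𝕜 (fun y => f (x, y)) (g x) ∘L fderiv 𝕜 g x)
      = 0 := by
  have hconst : HasFDerivAt (fun x' => F (f (x', g x'))) (0 : E →L[𝕜] K) x := by
    simpa only [hFfg] using hasFDerivAt_const (0 : K) x
  exact (hF.hasFDerivAt.comp x (hf.hasFDerivAt_comp_graph hg.hasFDerivAt)).unique hconst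

end Calculus

theorem LinearMap.toMatrix'_fderiv {𝕜 ι κ : Type*} [NontriviallyNormedField 𝕜]
    [Fintype ι] [DecidableEq ι] [Fintype κ] {Φ : (ι → 𝕜) → κ → 𝕜} {x : ι → 𝕜}
    (hΦ : DifferentiableAt 𝕜 Φ x) :
    LinearMap.toMatrix' (fderiv 𝕜 Φ x : (ι → 𝕜) →ₗ[𝕜] κ → 𝕜)
      = Matrix.of fun i j => fderiv 𝕜 (fun x' => Φ x' i) x (Pi.single j 1) := by
  ext i j
  simp [fderiv_apply hΦ]

/-- Concentration connectivity theorem in matrix form: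
`(∂S/∂e)(∂v/∂e)⁻¹(∂v/∂S) = −I`. -/
theorem concentration_connectivity {n m : ℕ}
    (v : (Fin n → ℝ) → (Fin m → ℝ) → (Fin n → ℝ))
    (F : (Fin n → ℝ) → (Fin m → ℝ))
    (hv : ContDiff ℝ 1 (fun p : (Fin n → ℝ) × (Fin m → ℝ) => v p.1 p.2))
    (hF : ContDiff ℝ 1 F)
    (S : (Fin n → ℝ) → (Fin m → ℝ))
    (hS : Differentiable ℝ S)
    (hFS : ∀ e, F (v e (S e)) = 0)
    (hinvFS : ∀ e, IsUnit
      ((Matrix.of fun (i : Fin m) (k : Fin n) =>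
          fderiv ℝ F (v e (S e)) (Pi.single k 1) i) *
       (Matrix.of fun (k : Fin n) (j : Fin m) =>
          fderiv ℝ (fun s => v e s k) (S e) (Pi.single j 1))))
    (hinvvE : ∀ e, IsUnit (Matrix.of fun k l : Fin n =>
      fderiv ℝ (fun e' => v e' (S e) k) e (Pi.single l 1))) :
    ∀ e,
      (Matrix.of fun (i : Fin m) (l : Fin n) =>
          fderiv ℝ (fun e' => S e' i) e (Pi.single l 1)) *
      (Matrix.of fun k l : Fin n =>
          fderiv ℝ (fun e' => v e' (S e) k) e (Pi.single l 1))⁻¹ *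
      (Matrix.of fun (k : Fin n) (j : Fin m) =>
          fderiv ℝ (fun s => v e s k) (S e) (Pi.single j 1))
      = -(1 : Matrix (Fin m) (Fin m) ℝ) := by
  intro e
  have hv' : DifferentiableAt ℝ (fun p : (Fin n → ℝ) × (Fin m → ℝ) => v p.1 p.2) (e, S e) :=
    hv.differentiable one_ne_zero _
  have hve : DifferentiableAt ℝ (fun e' => v e' (S e)) e := by fun_prop
  have hvs : DifferentiableAt ℝ (fun s => v e s) (S e) := by fun_prop
  have hchain := fderiv_comp_add_fderiv_comp_eq_zero_of_comp_graph_eq_zero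
    (hF.differentiable one_ne_zero _) hv' (hS e) hFS
  have hDF : (Matrix.of fun i k => fderiv ℝ F (v e (S e)) (Pi.single k 1) i)
      = LinearMap.toMatrix' (fderiv ℝ F (v e (S e)) : (Fin n → ℝ) →ₗ[ℝ] Fin m → ℝ) := rfl
  have hAB := hinvFS e
  have hD := hinvvE e
  rw [hDF, ← LinearMap.toMatrix'_fderiv hvs] at hAB
  rw [← LinearMap.toMatrix'_fderiv hve] at hD
  rw [← LinearMap.toMatrix'_fderiv (hS e), ← LinearMap.toMatrix'_fderiv hve,
    ← LinearMap.toMatrix'_fderiv hvs]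
  refine mul_nonsing_inv_mul_eq_neg_one_of_mul_add_mul_mul_eq_zero hAB hD ?_
  simpa [LinearMap.toMatrix'_comp, Matrix.mul_assoc] using congrArg
    (fun L : (Fin n → ℝ) →L[ℝ] Fin m → ℝ => LinearMap.toMatrix' (L : (Fin n → ℝ) →ₗ[ℝ] Fin m → ℝ))
    hchain
end

section
/- Flux connectivity theorem (matrix form): under the setup of the connectivity theorem, let v̂(e) = v(e, S(e)). Then (∂v̂/∂e)(∂v/∂e)⁻¹(∂v/∂S) = 0 (the n×m zero matrix), where ∂v/∂e and ∂v/∂S on the left treat S as independent and are evaluated at (e, S(e)). -/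
open Matrix

/-! Differentiating `F (v̂ e) = 0` gives `(∂F/∂v)(∂v̂/∂e) = 0`, and the chain rule gives
`∂v̂/∂e = ∂v/∂e + (∂v/∂S)(∂S/∂e)`. Substituting and cancelling the invertible `(∂F/∂v)(∂v/∂S)`
yields `(∂S/∂e)(∂v/∂e)⁻¹(∂v/∂S) = -1`, so `(∂v̂/∂e)(∂v/∂e)⁻¹(∂v/∂S) = ∂v/∂S - ∂v/∂S = 0`. -/

theorem Matrix.mul_nonsing_inv_mul_eq_zero_of_mul_eq_zero {ι κ R : Type*}
    [Fintype ι] [DecidableEq ι] [Fintype κ] [DecidableEq κ] [CommRing R]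
    {A D : Matrix ι ι R} {B : Matrix ι κ R} {C P : Matrix κ ι R}
    (hD : D = A + B * P) (hCD : C * D = 0) (hCB : IsUnit (C * B)) (hA : IsUnit A) :
    D * A⁻¹ * B = 0 := by
  have hA' : IsUnit A.det := (Matrix.isUnit_iff_isUnit_det A).mp hA
  have hPAB : P * A⁻¹ * B = -1 := by
    refine hCB.mul_left_cancel ?_
    have hCBP : C * B * P = -(C * A) := by
      rw [hD, Matrix.mul_add, ← Matrix.mul_assoc] at hCD
      exact eq_neg_of_add_eq_zero_right hCD
    calc C * B * (P * A⁻¹ * B) = C * B * P * (A⁻¹ * B) := by simp only [Matrix.mul_assoc]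
      _ = -(C * (A * (A⁻¹ * B))) := by rw [hCBP, Matrix.neg_mul, Matrix.mul_assoc]
      _ = C * B * -1 := by rw [mul_nonsing_inv_cancel_left _ _ hA', Matrix.mul_neg, Matrix.mul_one]
  calc D * A⁻¹ * B = A * (A⁻¹ * B) + B * (P * A⁻¹ * B) := by
        simp only [hD, Matrix.add_mul, Matrix.mul_assoc]
    _ = 0 := by rw [mul_nonsing_inv_cancel_left _ _ hA', hPAB, Matrix.mul_neg, Matrix.mul_one,
        add_neg_cancel]

section
variable {𝕜 E F G : Type*} [NontriviallyNormedField 𝕜] [NormedAddCommGroup E] [NormedSpace 𝕜 E]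
  [NormedAddCommGroup F] [NormedSpace 𝕜 F] [NormedAddCommGroup G] [NormedSpace 𝕜 G]

theorem fderiv_comp_graph_eq_add {v : E → F → G} {g : E → F} {x : E}
    (hv : DifferentiableAt 𝕜 (fun p : E × F => v p.1 p.2) (x, g x))
    (hg : DifferentiableAt 𝕜 g x) :
    fderiv 𝕜 (fun y => v y (g y)) x =
      fderiv 𝕜 (fun y => v y (g x)) x + (fderiv 𝕜 (v x) (g x)).comp (fderiv 𝕜 g x) := by
  set L := fderiv 𝕜 (fun p : E × F => v p.1 p.2) (x, g x)
  have hL : HasFDerivAt (fun p : E × F => v p.1 p.2) L (x, g x) := hv.hasFDerivAt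
  have htotal : HasFDerivAt (fun y => v y (g y))
      (L.comp ((ContinuousLinearMap.id 𝕜 E).prod (fderiv 𝕜 g x))) x :=
    (hL.comp x ((hasFDerivAt_id x).prodMk hg.hasFDerivAt) :)
  have hleft : HasFDerivAt (fun y => v y (g x)) (L.comp (.inl 𝕜 E F)) x :=
    (hL.comp x (hasFDerivAt_prodMk_left (𝕜 := 𝕜) x (g x)) :)
  have hright : HasFDerivAt (v x) (L.comp (.inr 𝕜 E F)) (g x) :=
    (hL.comp (g x) (hasFDerivAt_prodMk_right (𝕜 := 𝕜) x (g x)) :)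
  rw [htotal.fderiv, hleft.fderiv, hright.fderiv]
  ext y
  simp [← map_add]
end

theorem of_fderiv_apply_single_eq_toMatrix' {𝕜 ι κ : Type*} [NontriviallyNormedField 𝕜]
    [Fintype ι] [DecidableEq ι]
    {f : (ι → 𝕜) → κ → 𝕜} {x : ι → 𝕜} (hf : DifferentiableAt 𝕜 f x) :
    Matrix.of (fun i l => fderiv 𝕜 (fun y => f y i) x (Pi.single l 1)) =
      LinearMap.toMatrix' (fderiv 𝕜 f x : (ι → 𝕜) →ₗ[𝕜] κ → 𝕜) := by
  ext i l
  simp [fderiv_apply hf]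

/-- Flux connectivity theorem in matrix form:
`(∂v̂/∂e)(∂v/∂e)⁻¹(∂v/∂S) = 0` where `v̂(e) = v(e, S(e))`. -/
theorem flux_connectivity {n m : ℕ}
    (v : (Fin n → ℝ) → (Fin m → ℝ) → (Fin n → ℝ))
    (F : (Fin n → ℝ) → (Fin m → ℝ))
    (hv : ContDiff ℝ 1 (fun p : (Fin n → ℝ) × (Fin m → ℝ) => v p.1 p.2))
    (hF : ContDiff ℝ 1 F)
    (S : (Fin n → ℝ) → (Fin m → ℝ))
    (hS : Differentiable ℝ S)
    (hFS : ∀ e, F (v e (S e)) = 0)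
    (hinvFS : ∀ e, IsUnit
      ((Matrix.of fun (i : Fin m) (k : Fin n) =>
          fderiv ℝ F (v e (S e)) (Pi.single k 1) i) *
       (Matrix.of fun (k : Fin n) (j : Fin m) =>
          fderiv ℝ (fun s => v e s k) (S e) (Pi.single j 1))))
    (hinvvE : ∀ e, IsUnit (Matrix.of fun k l : Fin n =>
      fderiv ℝ (fun e' => v e' (S e) k) e (Pi.single l 1))) :
    ∀ e,
      (Matrix.of fun i l : Fin n =>
          fderiv ℝ (fun e' => v e' (S e') i) e (Pi.single l 1)) *
      (Matrix.of fun k l : Fin n =>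
          fderiv ℝ (fun e' => v e' (S e) k) e (Pi.single l 1))⁻¹ *
      (Matrix.of fun (k : Fin n) (j : Fin m) =>
          fderiv ℝ (fun s => v e s k) (S e) (Pi.single j 1))
      = (0 : Matrix (Fin n) (Fin m) ℝ) := by
  intro e
  have hvd : Differentiable ℝ (fun p : (Fin n → ℝ) × (Fin m → ℝ) => v p.1 p.2) :=
    hv.differentiable one_ne_zero
  have hv₁ : DifferentiableAt ℝ (fun e' => v e' (S e)) e :=
    hvd.differentiableAt.comp (f := fun e' => (e', S e)) e (by fun_prop)
  have hv₂ : DifferentiableAt ℝ (v e) (S e) :=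
    hvd.differentiableAt.comp (f := fun s => (e, s)) (S e) (by fun_prop)
  have hvS : DifferentiableAt ℝ (fun e' => v e' (S e')) e :=
    hvd.differentiableAt.comp (f := fun e' => (e', S e')) e (by fun_prop)
  have hF_vS : (fderiv ℝ F (v e (S e))).comp (fderiv ℝ (fun e' => v e' (S e')) e) = 0 := by
    rw [← fderiv_comp e (hF.differentiable one_ne_zero _) hvS, Function.comp_def, funext hFS]
    exact fderiv_const_apply 0
  have hA := hinvvE e
  have hCB := hinvFS e
  rw [of_fderiv_apply_single_eq_toMatrix' hv₁] at hA ⊢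
  rw [of_fderiv_apply_single_eq_toMatrix' hv₂] at hCB ⊢
  rw [of_fderiv_apply_single_eq_toMatrix' hvS]
  refine mul_nonsing_inv_mul_eq_zero_of_mul_eq_zero
    (C := LinearMap.toMatrix' (fderiv ℝ F (v e (S e)) : (Fin n → ℝ) →ₗ[ℝ] Fin m → ℝ))
    (P := LinearMap.toMatrix' (fderiv ℝ S e : (Fin n → ℝ) →ₗ[ℝ] Fin m → ℝ)) ?_ ?_ hCB hA
  · rw [fderiv_comp_graph_eq_add hvd.differentiableAt (hS e)]
    simp [LinearMap.toMatrix'_comp]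
  · rw [← LinearMap.toMatrix'_comp, ← ContinuousLinearMap.toLinearMap_comp, hF_vS]
    simp
end
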